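/- Let A be a left R-module with projective presentation σ_A, B a left S-module with projective presentation σ_B, and σ the induced projective presentation of (0,B) ⊕ (A,FA) in (F, S-Mod). Assume F commutes with direct sums. Then the object (A, FA ⊕ B) with structure map (1,0): FA → FA ⊕ B (which is isomorphic to (A,FA) ⊕ (0,B)) is silting with respect to σ if and only if: (1) A is silting with respect to σ_A; (2) B is silting with respect to σ_B; and (3) FA ∈ Gen B. -/

import Mathlib

/-!
A morphism from `(A, FA ⊕ B)` to `Z = (X, Y, φ)` is the same as a pair of maps `A → X`,
`B → Y`, compatibly with precomposition by `σ`; hence `Z ∈ D_σ` iff `X ∈ D_{σ_A}` and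
`Y ∈ D_{σ_B}`. Testing joint epimorphy of all maps out of `(A, FA ⊕ B)` against the objects
`(X', 0)` and `(0, Y')` shows that `Z ∈ Gen (A, FA ⊕ B)` iff `X ∈ Gen A` and `Y` is the sum of
`im φ` and the images of maps `B → Y`. Evaluating both descriptions at `(X, 0)`, `(0, Y)` and
`(A, FA)` gives (1)–(3). Conversely, by right exactness and preservation of direct sums,
`FX ∈ Gen FA ⊆ Gen B`, so `im φ` is already a sum of images of maps from `B`, and the two
descriptions agree.
-/

open CategoryTheory CategoryTheory.Limits

universe v u

section Generic

variable {𝒜 : Type*} [Category.{v} 𝒜]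

/-- For a morphism `σ : P₁ ⟶ P₀`, the class `D_σ` of objects `X` such that
`Hom(σ, X)` is surjective. -/
def Dclass {P₁ P₀ : 𝒜} (σ : P₁ ⟶ P₀) : Set 𝒜 :=
  {X | ∀ g : P₁ ⟶ X, ∃ h : P₀ ⟶ X, σ ≫ h = g}

/-- `Gen T` is the class of objects admitting an epimorphism from a coproduct (direct sum)
of copies of `T`. -/
def Gen (T : 𝒜) : Set 𝒜 :=
  {X | ∃ (ι : Type v) (c : Cofan (fun _ : ι => T)) (_ : IsColimit c) (f : c.pt ⟶ X), Epi f}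

variable [HasZeroMorphisms 𝒜]

/-- A projective presentation `P₁ → P₀ → T → 0` of an object `T`. -/
structure ProjPres (T : 𝒜) where
  P₁ : 𝒜
  P₀ : 𝒜
  σ : P₁ ⟶ P₀
  π : P₀ ⟶ T
  projective₁ : Projective P₁
  projective₀ : Projective P₀
  epi : Epi π
  w : σ ≫ π = 0
  exact : (ShortComplex.mk σ π w).Exact

/-- A class of objects is a torsion class if it is closed under (epimorphic) images,
direct sums (coproducts) and extensions. -/
def IsTorsionClass (𝒞 : Set 𝒜) : Prop :=
  (∀ ⦃X Y : 𝒜⦄ (f : X ⟶ Y), Epi f → X ∈ 𝒞 → Y ∈ 𝒞) ∧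
  (∀ (ι : Type v) (Xs : ι → 𝒜) (c : Cofan Xs), IsColimit c → (∀ i, Xs i ∈ 𝒞) → c.pt ∈ 𝒞) ∧
  (∀ (E : ShortComplex 𝒜), E.ShortExact → E.X₁ ∈ 𝒞 → E.X₃ ∈ 𝒞 → E.X₂ ∈ 𝒞)

/-- `T` is a silting object (with respect to some projective presentation) if it admits a
projective presentation `σ` with `D_σ = Gen T`. -/
def IsSilting (T : 𝒜) : Prop :=
  ∃ p : ProjPres T, Dclass p.σ = Gen T

/-- `T` is a partial silting object if it admits a projective presentation `σ` such that
`D_σ` is a torsion class and `T ∈ D_σ`. -/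
def IsPartialSilting (T : 𝒜) : Prop :=
  ∃ p : ProjPres T, IsTorsionClass (Dclass p.σ) ∧ T ∈ Dclass p.σ

end Generic

section CommaZero

variable {𝒜 : Type*} [Category 𝒜] {ℬ : Type*} [Category ℬ]
  [Preadditive 𝒜] [Preadditive ℬ] (F : 𝒜 ⥤ ℬ) [F.Additive]

instance : HasZeroMorphisms (Comma F (𝟭 ℬ)) where
  zero X Y := ⟨{ left := 0, right := 0, w := by simp }⟩
  comp_zero {X Y} f Z := by
    apply CommaMorphism.ext
    · show f.left ≫ 0 = 0
      simp
    · show f.right ≫ 0 = 0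
      simp
  zero_comp X {Y Z} f := by
    apply CommaMorphism.ext
    · show 0 ≫ f.left = 0
      simp
    · show 0 ≫ f.right = 0
      simp

end CommaZero

section ModComma

variable {R S : Type u} [Ring R] [Ring S]
  (F : ModuleCat.{u} R ⥤ ModuleCat.{u} S) [F.Additive]

/-- The object `(P, FP ⊕ Q)` of the comma category `(F, S-Mod)`, with structure map
`(1,0) : FP ⟶ FP ⊕ Q`; it is isomorphic to `(P, FP) ⊕ (0, Q)`. -/
def pairObj (P : ModuleCat.{u} R) (Q : ModuleCat.{u} S) :
    Comma F (𝟭 (ModuleCat.{u} S)) where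
  left := P
  right := ModuleCat.of S (F.obj P × Q)
  hom := ModuleCat.ofHom (LinearMap.inl S (F.obj P) Q)

/-- The morphism `(a, Fa ⊕ b) : (P₁, FP₁ ⊕ Q₁) ⟶ (P₀, FP₀ ⊕ Q₀)` in the comma
category `(F, S-Mod)`.  When `a = σ_A`, `b = σ_B` are projective presentations of `A` and
`B`, this is the induced projective presentation `σ` of `(0,B) ⊕ (A, FA)`. -/
def pairMap {P₁ P₀ : ModuleCat.{u} R} {Q₁ Q₀ : ModuleCat.{u} S}
    (a : P₁ ⟶ P₀) (b : Q₁ ⟶ Q₀) : pairObj F P₁ Q₁ ⟶ pairObj F P₀ Q₀ where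
  left := a
  right := ModuleCat.ofHom (LinearMap.prodMap (F.map a).hom b.hom)
  w := by
    apply ModuleCat.hom_ext
    apply LinearMap.ext
    intro x
    show ((LinearMap.inl S (F.obj P₀) Q₀).comp (F.map a).hom) x
        = ((LinearMap.prodMap (F.map a).hom b.hom).comp (LinearMap.inl S (F.obj P₁) Q₁)) x
    simp
    exact Prod.ext rfl (map_zero (ModuleCat.Hom.hom b)).symm

/-- The object `(M, 0)` of the comma category. -/
def leftObj (M : ModuleCat.{u} R) : Comma F (𝟭 (ModuleCat.{u} S)) where
  left := M
  right := ModuleCat.of S PUnit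
  hom := 0

/-- The object `(0, N)` of the comma category. -/
def rightObj (N : ModuleCat.{u} S) : Comma F (𝟭 (ModuleCat.{u} S)) where
  left := ModuleCat.of R PUnit
  right := N
  hom := 0

/-- The object `(M, FM)` of the comma category, with the identity structure map. -/
def diagObj (M : ModuleCat.{u} R) : Comma F (𝟭 (ModuleCat.{u} S)) where
  left := M
  right := F.obj M
  hom := 𝟙 (F.obj M)

end ModComma

section Generic

variable {𝒜 : Type*} [Category.{v} 𝒜]

theorem mem_gen_iff_cancel {T X : 𝒜} [HasCoproduct fun _ : (T ⟶ X) => T] :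
    X ∈ Gen T ↔ ∀ ⦃Y : 𝒜⦄ (u v : X ⟶ Y), (∀ g : T ⟶ X, g ≫ u = g ≫ v) → u = v := by
  constructor
  · rintro ⟨ι, c, hc, f, hf⟩ Y u v huv
    rw [← cancel_epi f]
    exact Cofan.IsColimit.hom_ext hc _ _ fun i => by simpa using huv (c.inj i ≫ f)
  · intro h
    refine ⟨T ⟶ X, _, coproductIsCoproduct _, Sigma.desc fun g => g,
      ⟨fun u v huv => h u v fun g => ?_⟩⟩
    simpa using Sigma.ι _ g ≫= huv

theorem mem_gen_trans [HasCoproducts.{v} 𝒜] {X M N : 𝒜} (hX : X ∈ Gen M) (hM : M ∈ Gen N) :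
    X ∈ Gen N := by
  rw [mem_gen_iff_cancel] at *
  exact fun Y u v huv => hX u v fun g => hM _ _ fun s => by simpa using huv (s ≫ g)

theorem map_mem_gen {ℬ : Type*} [Category.{v} ℬ] (G : 𝒜 ⥤ ℬ) [G.PreservesEpimorphisms]
    [∀ J : Type v, PreservesColimitsOfShape (Discrete J) G] {T X : 𝒜} (h : X ∈ Gen T) :
    G.obj X ∈ Gen (G.obj T) := by
  obtain ⟨ι, c, hc, f, hf⟩ := h
  exact ⟨ι, _, isColimitCofanMkObjOfIsColimit G _ c.inj hc, G.map f, inferInstance⟩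

theorem mem_Dclass_of_isZero {P₁ P₀ X : 𝒜} (σ : P₁ ⟶ P₀) (hX : IsZero X) : X ∈ Dclass σ :=
  fun _ => ⟨hX.from_ P₀, hX.eq_of_tgt _ _⟩

end Generic

namespace ModuleCat

variable {R : Type u} [Ring R]

theorem eq_top_iff_cancel {X : ModuleCat.{u} R} (N : Submodule R X) :
    N = ⊤ ↔ ∀ ⦃Y : ModuleCat.{u} R⦄ (u v : X ⟶ Y), N ≤ LinearMap.eqLocus u.hom v.hom → u = v := by
  refine ⟨fun h Y u v huv => hom_ext (LinearMap.eqLocus_eq_top.mp (top_le_iff.mp (h ▸ huv))),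
    fun h => ?_⟩
  have hmkQ : ofHom N.mkQ = 0 := h _ _ fun x hx => by simpa using hx
  simpa using congrArg (LinearMap.ker ∘ Hom.hom) hmkQ

theorem range_le_eqLocus_iff {M X Y : ModuleCat.{u} R} (g : M ⟶ X) (u v : X ⟶ Y) :
    LinearMap.range g.hom ≤ LinearMap.eqLocus u.hom v.hom ↔ g ≫ u = g ≫ v := by
  constructor
  · intro h
    ext x
    exact h ⟨x, rfl⟩
  · rintro h _ ⟨x, rfl⟩
    exact congr($h x)

theorem mem_gen_iff {M X : ModuleCat.{u} R} :
    X ∈ Gen M ↔ ⨆ g : M ⟶ X, LinearMap.range g.hom = ⊤ := by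
  simp only [mem_gen_iff_cancel, eq_top_iff_cancel, iSup_le_iff, range_le_eqLocus_iff]

theorem range_le_iSup_range_of_mem_gen {M X Y : ModuleCat.{u} R} (hX : X ∈ Gen M) (f : X ⟶ Y) :
    LinearMap.range f.hom ≤ ⨆ r : M ⟶ Y, LinearMap.range r.hom := by
  rw [mem_gen_iff] at hX
  rw [LinearMap.range_eq_map, ← hX, Submodule.map_iSup]
  exact iSup_le fun g => le_iSup_of_le (g ≫ f) (LinearMap.range_comp _ _).ge

end ModuleCat

section PairObj

variable {R S : Type u} [Ring R] [Ring S] (F : ModuleCat.{u} R ⥤ ModuleCat.{u} S)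

def pairInr (P : ModuleCat.{u} R) (Q : ModuleCat.{u} S) : Q ⟶ (pairObj F P Q).right :=
  ModuleCat.ofHom (LinearMap.inr S (F.obj P) Q)

def pairHom {A : ModuleCat.{u} R} {B : ModuleCat.{u} S} (Z : Comma F (𝟭 (ModuleCat.{u} S)))
    (f : A ⟶ Z.left) (r : B ⟶ Z.right) : pairObj F A B ⟶ Z where
  left := f
  right := ModuleCat.ofHom (LinearMap.coprod (Z.hom.hom ∘ₗ (F.map f).hom) r.hom)
  w := by
    ext x
    simp [pairObj]

theorem pairInr_pairHom_right {A : ModuleCat.{u} R} {B : ModuleCat.{u} S}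
    (Z : Comma F (𝟭 (ModuleCat.{u} S))) (f : A ⟶ Z.left) (r : B ⟶ Z.right) :
    pairInr F A B ≫ (pairHom F Z f r).right = r :=
  ModuleCat.hom_ext (LinearMap.coprod_inr _ _)

theorem pairInr_pairMap_right {P₁ P₀ : ModuleCat.{u} R} {Q₁ Q₀ : ModuleCat.{u} S}
    (a : P₁ ⟶ P₀) (b : Q₁ ⟶ Q₀) :
    pairInr F P₁ Q₁ ≫ (pairMap F a b).right = b ≫ pairInr F P₀ Q₀ :=
  ModuleCat.hom_ext (LinearMap.ext fun _ => Prod.ext (map_zero (F.map a).hom) rfl)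

/-- The `F P`-component of `h.right` is determined by `h.left` through the commutative square. -/
theorem pairObj_hom_ext {P : ModuleCat.{u} R} {Q : ModuleCat.{u} S}
    {Z : Comma F (𝟭 (ModuleCat.{u} S))} {h h' : pairObj F P Q ⟶ Z} (hl : h.left = h'.left)
    (hr : pairInr F P Q ≫ h.right = pairInr F P Q ≫ h'.right) : h = h' := by
  have hinl : (pairObj F P Q).hom ≫ h.right = (pairObj F P Q).hom ≫ h'.right := by
    rw [← Functor.id_map h.right, ← h.w, hl, h'.w, Functor.id_map]
  exact Comma.hom_ext _ _ hl (ModuleCat.hom_ext (LinearMap.prod_ext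
    (congrArg ModuleCat.Hom.hom hinl) (congrArg ModuleCat.Hom.hom hr)))

theorem mem_Dclass_pairMap_iff {P₁ P₀ : ModuleCat.{u} R} {Q₁ Q₀ : ModuleCat.{u} S}
    (a : P₁ ⟶ P₀) (b : Q₁ ⟶ Q₀) (Z : Comma F (𝟭 (ModuleCat.{u} S))) :
    Z ∈ Dclass (pairMap F a b) ↔ Z.left ∈ Dclass a ∧ Z.right ∈ Dclass b := by
  constructor
  · intro hZ
    refine ⟨fun g => ?_, fun r => ?_⟩
    · obtain ⟨h, hh⟩ := hZ (pairHom F Z g 0)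
      exact ⟨h.left, congrArg CommaMorphism.left hh⟩
    · obtain ⟨h, hh⟩ := hZ (pairHom F Z 0 r)
      refine ⟨pairInr F P₀ Q₀ ≫ h.right, ?_⟩
      have := pairInr F P₁ Q₁ ≫= congrArg CommaMorphism.right hh
      rwa [Comma.comp_right, ← Category.assoc, pairInr_pairMap_right, Category.assoc,
        pairInr_pairHom_right] at this
  · rintro ⟨hl, hr⟩ g
    obtain ⟨f, hf⟩ := hl g.left
    obtain ⟨s, hs⟩ := hr (pairInr F P₁ Q₁ ≫ g.right)
    refine ⟨pairHom F Z f s, pairObj_hom_ext F hf ?_⟩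
    rw [Comma.comp_right, ← Category.assoc, pairInr_pairMap_right, Category.assoc,
      pairInr_pairHom_right, hs]

theorem leftObj_mem_Dclass_pairMap_iff {P₁ P₀ : ModuleCat.{u} R} {Q₁ Q₀ : ModuleCat.{u} S}
    (a : P₁ ⟶ P₀) (b : Q₁ ⟶ Q₀) (X : ModuleCat.{u} R) :
    leftObj F X ∈ Dclass (pairMap F a b) ↔ X ∈ Dclass a := by
  rw [mem_Dclass_pairMap_iff]
  exact and_iff_left
    (mem_Dclass_of_isZero b (ModuleCat.isZero_of_subsingleton (ModuleCat.of S PUnit)))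

theorem rightObj_mem_Dclass_pairMap_iff {P₁ P₀ : ModuleCat.{u} R} {Q₁ Q₀ : ModuleCat.{u} S}
    (a : P₁ ⟶ P₀) (b : Q₁ ⟶ Q₀) (Y : ModuleCat.{u} S) :
    rightObj F Y ∈ Dclass (pairMap F a b) ↔ Y ∈ Dclass b := by
  rw [mem_Dclass_pairMap_iff]
  exact and_iff_right
    (mem_Dclass_of_isZero a (ModuleCat.isZero_of_subsingleton (ModuleCat.of R PUnit)))

def toLeftObj {Z : Comma F (𝟭 (ModuleCat.{u} S))} {Y : ModuleCat.{u} R} (u : Z.left ⟶ Y) :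
    Z ⟶ leftObj F Y where
  left := u
  right := 0
  w := (ModuleCat.isZero_of_subsingleton (ModuleCat.of S PUnit)).eq_of_tgt _ _

def toRightObj {Z : Comma F (𝟭 (ModuleCat.{u} S))} {Y : ModuleCat.{u} S} (v : Z.right ⟶ Y)
    (hv : Z.hom ≫ v = 0) : Z ⟶ rightObj F Y where
  left := 0
  right := v
  w := by simpa [rightObj] using hv.symm

variable [∀ J : Type u, PreservesColimitsOfShape (Discrete J) F]

theorem mem_gen_pairObj_iff {A : ModuleCat.{u} R} {B : ModuleCat.{u} S}
    (Z : Comma F (𝟭 (ModuleCat.{u} S))) :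
    Z ∈ Gen (pairObj F A B) ↔
      Z.left ∈ Gen A ∧
        LinearMap.range Z.hom.hom ⊔ ⨆ r : B ⟶ Z.right, LinearMap.range r.hom = ⊤ := by
  simp only [mem_gen_iff_cancel, ModuleCat.eq_top_iff_cancel, sup_le_iff, iSup_le_iff,
    ModuleCat.range_le_eqLocus_iff]
  constructor
  · intro h
    constructor
    · intro Y u v huv
      refine congrArg CommaMorphism.left (h (toLeftObj F u) (toLeftObj F v) fun g => ?_)
      exact Comma.hom_ext _ _ (huv g.left)
        ((ModuleCat.isZero_of_subsingleton (ModuleCat.of S PUnit)).eq_of_tgt _ _)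
    · rintro Y u v ⟨hZ, hr⟩
      have hsub : Z.hom ≫ (u - v) = 0 := by rw [Preadditive.comp_sub, hZ, sub_self]
      refine sub_eq_zero.mp (congrArg CommaMorphism.right
        (h (toRightObj F (u - v) hsub) (toRightObj F 0 comp_zero) fun g => ?_))
      refine pairObj_hom_ext F
        ((ModuleCat.isZero_of_subsingleton (ModuleCat.of R PUnit)).eq_of_tgt _ _) ?_
      change pairInr F A B ≫ g.right ≫ (u - v) = pairInr F A B ≫ g.right ≫ 0
      rw [comp_zero, comp_zero, ← Category.assoc, Preadditive.comp_sub, hr, sub_self]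
  · rintro ⟨hl, hr⟩ W u v huv
    have hleft : u.left = v.left := hl _ _ fun g =>
      congrArg CommaMorphism.left (huv (pairHom F Z g 0))
    refine Comma.hom_ext _ _ hleft (hr _ _ ⟨?_, fun r => ?_⟩)
    · rw [← Functor.id_map u.right, ← Functor.id_map v.right, ← u.w, ← v.w, hleft]
    · have := pairInr F A B ≫= congrArg CommaMorphism.right (huv (pairHom F Z 0 r))
      rwa [Comma.comp_right, Comma.comp_right, ← Category.assoc, ← Category.assoc,
        pairInr_pairHom_right] at this

theorem leftObj_mem_gen_pairObj_iff (A X : ModuleCat.{u} R) (B : ModuleCat.{u} S) :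
    leftObj F X ∈ Gen (pairObj F A B) ↔ X ∈ Gen A := by
  rw [mem_gen_pairObj_iff]
  exact and_iff_left (Subsingleton.elim (α := Submodule S PUnit.{u + 1}) _ _)

theorem rightObj_mem_gen_pairObj_iff (A : ModuleCat.{u} R) (B Y : ModuleCat.{u} S) :
    rightObj F Y ∈ Gen (pairObj F A B) ↔ Y ∈ Gen B := by
  rw [mem_gen_pairObj_iff, ModuleCat.mem_gen_iff (X := Y), ModuleCat.mem_gen_iff]
  rw [show LinearMap.range (rightObj F Y).hom.hom = ⊥ from LinearMap.range_zero, bot_sup_eq]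
  exact and_iff_right (Subsingleton.elim (α := Submodule R PUnit.{u + 1}) _ _)

theorem diagObj_mem_gen_pairObj (A : ModuleCat.{u} R) (B : ModuleCat.{u} S) :
    diagObj F A ∈ Gen (pairObj F A B) := by
  rw [mem_gen_pairObj_iff, ModuleCat.mem_gen_iff]
  exact ⟨eq_top_iff.2 (le_iSup_of_le (𝟙 A) LinearMap.range_id.ge),
    eq_top_iff.2 (le_sup_of_le_left LinearMap.range_id.ge)⟩

end PairObj

/-- Theorem.  Assume `F` commutes with direct sums.  Then the object
`(A, FA ⊕ B)` with structure map `(1,0) : FA ⟶ FA ⊕ B` (which is isomorphic to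
`(A,FA) ⊕ (0,B)`) is silting with respect to the induced projective presentation `σ`
if and only if
(1) `A` is silting with respect to `σ_A`;
(2) `B` is silting with respect to `σ_B`;
(3) `FA ∈ Gen B`. -/
theorem pairObj_silting_iff {R S : Type u} [Ring R] [Ring S]
    (F : ModuleCat.{u} R ⥤ ModuleCat.{u} S) [F.Additive] [PreservesFiniteColimits F]
    [∀ J : Type u, PreservesColimitsOfShape (Discrete J) F]
    {A : ModuleCat.{u} R} {B : ModuleCat.{u} S}
    (pA : ProjPres A) (pB : ProjPres B) :
    Dclass (pairMap F pA.σ pB.σ) = Gen (pairObj F A B) ↔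
      (Dclass pA.σ = Gen A ∧ Dclass pB.σ = Gen B ∧ F.obj A ∈ Gen B) := by
  constructor
  · intro hD
    have hA : Dclass pA.σ = Gen A := Set.ext fun X => by
      rw [← leftObj_mem_Dclass_pairMap_iff F pA.σ pB.σ, hD, leftObj_mem_gen_pairObj_iff]
    have hB : Dclass pB.σ = Gen B := Set.ext fun Y => by
      rw [← rightObj_mem_Dclass_pairMap_iff F pA.σ pB.σ, hD, rightObj_mem_gen_pairObj_iff]
    have hdiag : diagObj F A ∈ Dclass (pairMap F pA.σ pB.σ) :=
      hD ▸ diagObj_mem_gen_pairObj F A B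
    refine ⟨hA, hB, ?_⟩
    rw [← hB]
    exact ((mem_Dclass_pairMap_iff F _ _ _).mp hdiag).2
  · rintro ⟨hA, hB, hFA⟩
    ext Z
    rw [mem_Dclass_pairMap_iff, hA, hB, mem_gen_pairObj_iff,
      ModuleCat.mem_gen_iff (X := Z.right)]
    refine and_congr_right fun hZ => ?_
    have hFZ : F.obj Z.left ∈ Gen B := mem_gen_trans (map_mem_gen F hZ) hFA
    have hle := ModuleCat.range_le_iSup_range_of_mem_gen hFZ Z.hom
    exact ⟨fun h => eq_top_iff.2 (le_sup_of_le_right h.ge), (sup_eq_right.mpr hle).symm.trans⟩
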